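/- For every γ > σ²δ²/(2η²) there exists a unique b > 0 such that g₁(b) = f₁(γ). (In particular 0 < f₁(γ) < 1/θ₊ for such γ, where θ₊ < δ/η.) -/

import Mathlib

/-!
With `s₀ = √(η² + 2σ²δ)` the roots are `θ± = (-η ± s₀)/σ²`, so `θ₋ < 0 < θ₊`, and since
`ηθ₊ = δ - σ²θ₊²/2 < δ` we get `θ₊ < δ/η`. Clearing the positive denominator `h₁'(b)`,
`g₁(b) = v` becomes `e^{(θ₊-θ₋)b} = (1 - vθ₋)/(1 - vθ₊)`, which has exactly one solution; it
is positive when `0 < v < 1/θ₊`, because the right side then exceeds `1`. For `v = f₁(γ)` the upper bound is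
`f₁(γ) ≤ ηγ/(δ(δ+γ)) < η/δ < 1/θ₊`; the lower bound follows by rationalizing
`σ²/(η + s) = (s - η)/(2(δ+γ))`, and `f₁(γ) > 0` then reduces to `σ²δ² < 2η²γ`.
-/

open Real Filter Set

/-- Positive root θ₊ of (σ²/2)r² + ηr − δ = 0. -/
noncomputable def thetaP (σ η δ : ℝ) : ℝ := (-η + Real.sqrt (η ^ 2 + 2 * σ ^ 2 * δ)) / σ ^ 2

/-- Negative root θ₋ of (σ²/2)r² + ηr − δ = 0. -/
noncomputable def thetaM (σ η δ : ℝ) : ℝ := (-η - Real.sqrt (η ^ 2 + 2 * σ ^ 2 * δ)) / σ ^ 2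

/-- h₁(x) = e^{θ₊x} − e^{θ₋x}. -/
noncomputable def h1 (σ η δ : ℝ) (x : ℝ) : ℝ :=
  Real.exp (thetaP σ η δ * x) - Real.exp (thetaM σ η δ * x)

/-- h₁'(x) = θ₊e^{θ₊x} − θ₋e^{θ₋x}. -/
noncomputable def h1' (σ η δ : ℝ) (x : ℝ) : ℝ :=
  thetaP σ η δ * Real.exp (thetaP σ η δ * x) - thetaM σ η δ * Real.exp (thetaM σ η δ * x)

/-- g₁(b) = h₁(b)/h₁'(b). -/
noncomputable def g1 (σ η δ : ℝ) (b : ℝ) : ℝ := h1 σ η δ b / h1' σ η δ b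

/-- f₁(γ) = ηγ/(δ(δ+γ)) − σ²/(η + √(η² + 2σ²(δ+γ))). -/
noncomputable def f1 (σ η δ : ℝ) (γ : ℝ) : ℝ :=
  η * γ / (δ * (δ + γ)) - σ ^ 2 / (η + Real.sqrt (η ^ 2 + 2 * σ ^ 2 * (δ + γ)))

theorem existsUnique_pos_exp_mul_eq {k R : ℝ} (hk : 0 < k) (hR : 1 < R) :
    ∃! b : ℝ, 0 < b ∧ exp (k * b) = R := by
  refine ⟨log R / k, ⟨div_pos (log_pos hR) hk, ?_⟩, ?_⟩
  · rw [mul_div_cancel₀ _ hk.ne', exp_log (by linarith)]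
  · rintro b ⟨-, hb⟩
    rw [eq_div_iff hk.ne', mul_comm, ← hb, log_exp]

theorem exp_sub_exp_div_eq_iff {a c v b : ℝ} (hden : a * exp (a * b) - c * exp (c * b) ≠ 0)
    (hva : v * a ≠ 1) :
    (exp (a * b) - exp (c * b)) / (a * exp (a * b) - c * exp (c * b)) = v ↔
      exp ((a - c) * b) = (1 - v * c) / (1 - v * a) := by
  have hsplit : exp (a * b) = exp ((a - c) * b) * exp (c * b) := by
    rw [← exp_add]; ring_nf
  rw [div_eq_iff hden, eq_div_iff (sub_ne_zero.2 hva.symm), hsplit]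
  constructor <;> intro h
  · apply mul_right_cancel₀ (exp_pos (c * b)).ne'
    linear_combination h
  · linear_combination exp (c * b) * h

theorem existsUnique_pos_exp_sub_exp_div_eq {a c v : ℝ} (ha : 0 < a) (hc : c ≤ 0) (hv : 0 < v)
    (hva : v * a < 1) :
    ∃! b : ℝ, 0 < b ∧ (exp (a * b) - exp (c * b)) / (a * exp (a * b) - c * exp (c * b)) = v := by
  have hden (b : ℝ) : a * exp (a * b) - c * exp (c * b) ≠ 0 := by
    have := mul_pos ha (exp_pos (a * b))
    have := mul_nonpos_of_nonpos_of_nonneg hc (exp_pos (c * b)).le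
    linarith
  have hvc : v * c ≤ 0 := mul_nonpos_of_nonneg_of_nonpos hv.le hc
  have hR : 1 < (1 - v * c) / (1 - v * a) := by
    rw [one_lt_div (by linarith)]
    nlinarith
  rw [existsUnique_congr fun b => and_congr_right fun _ => exp_sub_exp_div_eq_iff (hden b) hva.ne]
  exact existsUnique_pos_exp_mul_eq (by linarith) hR

section Roots

variable {σ η δ : ℝ}

theorem thetaP_pos (hσ : σ ≠ 0) (hδ : 0 < δ) : 0 < thetaP σ η δ := by
  have : η < √(η ^ 2 + 2 * σ ^ 2 * δ) := lt_sqrt_of_sq_lt (lt_add_of_pos_right _ (by positivity))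
  unfold thetaP
  exact div_pos (by linarith) (by positivity)

theorem thetaM_neg (hσ : σ ≠ 0) (hδ : 0 < δ) : thetaM σ η δ < 0 := by
  have : -η < √(η ^ 2 + 2 * σ ^ 2 * δ) := lt_sqrt_of_sq_lt (by rw [neg_sq]; exact lt_add_of_pos_right _ (by positivity))
  unfold thetaM
  exact div_neg_of_neg_of_pos (by linarith) (by positivity)

theorem thetaP_isRoot (hσ : σ ≠ 0) (hδ : 0 ≤ δ) :
    σ ^ 2 / 2 * thetaP σ η δ ^ 2 + η * thetaP σ η δ - δ = 0 := by
  unfold thetaP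
  set s := √(η ^ 2 + 2 * σ ^ 2 * δ)
  have hs : s ^ 2 = η ^ 2 + 2 * σ ^ 2 * δ := sq_sqrt (by positivity)
  field_simp
  linear_combination hs

theorem thetaP_lt_div (hσ : σ ≠ 0) (hη : 0 < η) (hδ : 0 < δ) : thetaP σ η δ < δ / η := by
  have hroot := thetaP_isRoot (η := η) hσ hδ.le
  have : 0 < σ ^ 2 / 2 * thetaP σ η δ ^ 2 := by
    have := thetaP_pos (η := η) hσ hδ
    positivity
  rw [lt_div_iff₀ hη]
  linarith

end Roots

section Threshold

variable {σ η δ γ : ℝ}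

theorem f1_le (hη : 0 ≤ η) : f1 σ η δ γ ≤ η * γ / (δ * (δ + γ)) :=
  sub_le_self _ (by positivity)

theorem f1_lt_div (hη : 0 < η) (hδ : 0 < δ) (hγ : 0 < δ + γ) : f1 σ η δ γ < η / δ := by
  refine (f1_le hη.le).trans_lt ?_
  rw [div_lt_div_iff₀ (by positivity) hδ]
  nlinarith [mul_pos (mul_pos hη hδ) hδ]

theorem f1_pos (hη : 0 < η) (hδ : 0 < δ) (hγ : σ ^ 2 * δ ^ 2 / (2 * η ^ 2) < γ) :
    0 < f1 σ η δ γ := by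
  have hγ0 : 0 < γ := lt_of_le_of_lt (by positivity) hγ
  have hγ' : σ ^ 2 * δ ^ 2 < 2 * η ^ 2 * γ := by
    rw [div_lt_iff₀ (by positivity)] at hγ; linarith
  set s := √(η ^ 2 + 2 * σ ^ 2 * (δ + γ))
  have hs : s ^ 2 = η ^ 2 + 2 * σ ^ 2 * (δ + γ) := sq_sqrt (by positivity)
  have hrat : σ ^ 2 / (η + s) = (s - η) / (2 * (δ + γ)) := by
    rw [div_eq_div_iff (by positivity) (by positivity)]
    linear_combination -hs
  have hs_lt : s < η + 2 * η * γ / δ := by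
    have hgap : (η + 2 * η * γ / δ) ^ 2 - (η ^ 2 + 2 * σ ^ 2 * (δ + γ))
        = 2 * (δ + γ) * (2 * η ^ 2 * γ - σ ^ 2 * δ ^ 2) / δ ^ 2 := by
      field_simp
      ring
    have := sub_pos.2 hγ'
    rw [sqrt_lt' (by positivity), ← sub_pos, hgap]
    positivity
  unfold f1
  rw [hrat, sub_pos]
  calc (s - η) / (2 * (δ + γ)) < 2 * η * γ / δ / (2 * (δ + γ)) := by gcongr; linarith
    _ = η * γ / (δ * (δ + γ)) := by field_simp

end Threshold

theorem exists_unique_barrier (σ η δ : ℝ) (hσ : 0 < σ) (hη : 0 < η) (hδ : 0 < δ) :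
    (∀ γ : ℝ, σ ^ 2 * δ ^ 2 / (2 * η ^ 2) < γ →
      (0 < f1 σ η δ γ ∧ f1 σ η δ γ < 1 / thetaP σ η δ) ∧
      (∃! b : ℝ, 0 < b ∧ g1 σ η δ b = f1 σ η δ γ)) ∧
    thetaP σ η δ < δ / η := by
  have hθP := thetaP_pos (η := η) hσ.ne' hδ
  have hθ := thetaP_lt_div hσ.ne' hη hδ
  refine ⟨fun γ hγ => ?_, hθ⟩
  have hγ0 : 0 < γ := lt_of_le_of_lt (by positivity) hγ
  have hv0 := f1_pos hη hδ hγ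
  have hv1 : f1 σ η δ γ < 1 / thetaP σ η δ := by
    calc f1 σ η δ γ < η / δ := f1_lt_div hη hδ (by linarith)
      _ = 1 / (δ / η) := (one_div_div δ η).symm
      _ < 1 / thetaP σ η δ := one_div_lt_one_div_of_lt hθP hθ
  refine ⟨⟨hv0, hv1⟩, ?_⟩
  exact existsUnique_pos_exp_sub_exp_div_eq hθP (thetaM_neg hσ.ne' hδ).le hv0
    (by rwa [lt_div_iff₀ hθP] at hv1)
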